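/- For all integers i, j with 0 ≤ i, 0 ≤ j, and i ≠ j, the quantity σ(i,j) := 2 * ∑_{k=0}^{i} ∑_{l=0}^{j} (-1)^{k+l}/(k+l+4) * C(i,k) * C(j,l) * (2*(k+l+4)!/((k+3)!(l+3)!) − 1 − (k+1)(l+1)/((k+3)(l+3))) equals 16/((i+3)(i+2)(i+1)(j+3)(j+2)(j+1)) − 24/((i+j+4)(i+j+3)(i+j+2)(i+j+1)). -/
import Mathlib

open Finset

lemma diff_sum (f : ℕ → ℚ) (n : ℕ) :
    ∑ k ∈ range (n+2), (-1:ℚ)^k * (n+1).choose k * f k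
      = ∑ k ∈ range (n+1), (-1:ℚ)^k * n.choose k * (f k - f (k+1)) := by
  have h1 : ∑ k ∈ range (n+2), (-1:ℚ)^k * (n+1).choose k * f k
      = (∑ k ∈ range (n+1), (-1:ℚ)^(k+1) * ((n.choose (k+1) : ℚ) + n.choose k) * f (k+1))
        + (-1:ℚ)^0 * (n+1).choose 0 * f 0 := by
    rw [Finset.sum_range_succ' (fun k => (-1:ℚ)^k * (n+1).choose k * f k) (n+1)]
    congr 1
    apply Finset.sum_congr rfl
    intro k _
    rw [Nat.choose_succ_succ]
    push_cast
    ring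
  have h2 : ∑ k ∈ range (n+1), (-1:ℚ)^(k+1) * (n.choose (k+1) : ℚ) * f (k+1)
      = ∑ k ∈ range (n+1), (-1:ℚ)^k * n.choose k * f k - (-1:ℚ)^0 * n.choose 0 * f 0 := by
    rw [eq_sub_iff_add_eq]
    rw [← Finset.sum_range_succ' (fun k => (-1:ℚ)^k * (n.choose k : ℚ) * f k) (n+1)]
    rw [Finset.sum_range_succ]
    simp [Nat.choose_succ_self]
  rw [h1]
  have : ∀ k ∈ range (n+1), (-1:ℚ)^(k+1) * ((n.choose (k+1) : ℚ) + n.choose k) * f (k+1)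
      = (-1:ℚ)^(k+1) * (n.choose (k+1) : ℚ) * f (k+1) + (-(-1:ℚ)^k * n.choose k * f (k+1)) := by
    intro k _; ring
  rw [Finset.sum_congr rfl this, Finset.sum_add_distrib, h2]
  have h3 : ∑ k ∈ range (n+1), (-1:ℚ)^k * n.choose k * (f k - f (k+1))
      = (∑ k ∈ range (n+1), (-1:ℚ)^k * n.choose k * f k)
        - ∑ k ∈ range (n+1), (-1:ℚ)^k * n.choose k * f (k+1) := by
    rw [← Finset.sum_sub_distrib]
    exact Finset.sum_congr rfl fun k _ => by ring
  have h4 : ∑ x ∈ range (n+1), -(-1:ℚ)^x * n.choose x * f (x+1)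
      = - ∑ x ∈ range (n+1), (-1:ℚ)^x * n.choose x * f (x+1) := by
    rw [← Finset.sum_neg_distrib]
    exact Finset.sum_congr rfl fun k _ => by ring
  rw [h3, h4]
  simp only [Nat.choose_zero_right, Nat.cast_one, pow_zero, one_mul, mul_one]
  ring

lemma sumG (b : ℕ) : ∀ (n d : ℕ),
    ∑ k ∈ range (n+1), (-1:ℚ)^k * n.choose k * ((k+b).factorial / (k+b+1+d).factorial)
      = b.factorial * (n+d).factorial / (d.factorial * (n+b+1+d).factorial) := by
  intro n
  induction n with
  | zero =>
    intro d
    simp only [Finset.sum_range_one, pow_zero, Nat.choose_zero_right, Nat.cast_one, one_mul,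
      zero_add]
    have hd : (d.factorial : ℚ) ≠ 0 := Nat.cast_ne_zero.2 d.factorial_ne_zero
    have hb : ((b+1+d).factorial : ℚ) ≠ 0 := Nat.cast_ne_zero.2 (b+1+d).factorial_ne_zero
    field_simp
  | succ n ih =>
    intro d
    rw [show n+1+1 = n+2 from rfl, diff_sum]
    have key : ∀ k ∈ range (n+1), (-1:ℚ)^k * n.choose k *
        (((k+b).factorial : ℚ) / (k+b+1+d).factorial - ((k+1+b).factorial : ℚ) / (k+1+b+1+d).factorial)
        = (d+1) * ((-1:ℚ)^k * n.choose k * (((k+b).factorial : ℚ) / (k+b+1+(d+1)).factorial)) := by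
      intro k _
      have e1 : (k+1+b+1+d) = (k+b+1+d) + 1 := by omega
      have e2 : (k+b+1+(d+1)) = (k+b+1+d) + 1 := by omega
      have e3 : (k+1+b) = (k+b) + 1 := by omega
      rw [e1, e2, e3, Nat.factorial_succ ((k+b+1+d)), Nat.factorial_succ (k+b)]
      have h1 : ((k+b+1+d).factorial : ℚ) ≠ 0 := Nat.cast_ne_zero.2 (Nat.factorial_ne_zero _)
      have h2 : ((k+b+1+d : ℕ) : ℚ) + 1 ≠ 0 := by positivity
      push_cast
      field_simp
      ring
    rw [Finset.sum_congr rfl key, ← Finset.mul_sum, ih (d+1)]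
    have e4 : (n+b+1+(d+1)) = (n+1+b+1+d) := by omega
    rw [e4, Nat.factorial_succ d, show n+(d+1) = (n+d)+1 from by omega, show n+1+d = (n+d)+1 from by omega, Nat.factorial_succ (n+d)]
    have h1 : ((n+1+b+1+d).factorial : ℚ) ≠ 0 := Nat.cast_ne_zero.2 (Nat.factorial_ne_zero _)
    have h2 : (d.factorial : ℚ) ≠ 0 := Nat.cast_ne_zero.2 d.factorial_ne_zero
    have h3 : ((d:ℚ)+1) ≠ 0 := by positivity
    push_cast
    field_simp

lemma sumD : ∀ (i c l : ℕ),
    ∑ k ∈ range (i+1), (-1:ℚ)^k * i.choose k * ((k+c).choose l : ℕ)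
      = (-1:ℚ)^i * (if i ≤ l then ((c.choose (l-i)) : ℚ) else 0) := by
  intro i
  induction i with
  | zero => intro c l; simp
  | succ i ih =>
    intro c l
    rw [show i+1+1 = i+2 from rfl, diff_sum]
    match l with
    | 0 =>
      have : ∀ k ∈ range (i+1), (-1:ℚ)^k * i.choose k *
          (((k+c).choose 0 : ℕ) - (((k+1+c).choose 0 : ℕ) : ℚ)) = 0 := by
        intro k _; simp
      rw [Finset.sum_congr rfl this, Finset.sum_const_zero]
      simp
    | l+1 =>
      have : ∀ k ∈ range (i+1), (-1:ℚ)^k * i.choose k *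
          (((k+c).choose (l+1) : ℕ) - (((k+1+c).choose (l+1) : ℕ) : ℚ))
          = -((-1:ℚ)^k * i.choose k * ((k+c).choose l : ℕ)) := by
        intro k _
        rw [show k+1+c = (k+c)+1 from by omega, Nat.choose_succ_succ]
        push_cast
        ring
      rw [Finset.sum_congr rfl this, Finset.sum_neg_distrib, ih c l]
      rw [show l+1-(i+1) = l-i from by omega]
      simp only [Nat.add_le_add_iff_right]
      ring

lemma term_eq (i j k l : ℕ) :
    (-1 : ℚ) ^ (k + l) / (k + l + 4) * (i.choose k) * (j.choose l) *
        (2 * (Nat.factorial (k + l + 4)) /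
            ((Nat.factorial (k + 3)) * (Nat.factorial (l + 3))) - 1 -
          ((k : ℚ) + 1) * (l + 1) / (((k : ℚ) + 3) * (l + 3)))
    = (-1:ℚ)^k * i.choose k * ((-1:ℚ)^l * j.choose l *
        (2 * (((k+(l+3)).choose l : ℕ) : ℚ) / (((l:ℚ)+1)*((l:ℚ)+2)*((l:ℚ)+3))))
      - (-1:ℚ)^k * i.choose k * ((-1:ℚ)^l * j.choose l * (2 * (1/((k:ℚ)+(l:ℚ)+4))))
      + (-1:ℚ)^k * i.choose k * ((-1:ℚ)^l * j.choose l *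
        (2 * ((1/((k:ℚ)+3)) * (1/((l:ℚ)+3))))) := by
  have h1 : (k+(l+3)).choose l * l.factorial * (k+3).factorial = (k+l+3).factorial := by
    have h := Nat.choose_mul_factorial_mul_factorial (show l ≤ k+(l+3) by omega)
    rw [show k+(l+3)-l = k+3 from by omega] at h
    rw [h, show k+(l+3) = k+l+3 from by omega]
  have key : ((k+l+4).factorial : ℚ)
      = ((k:ℚ)+l+4) * ((k+(l+3)).choose l : ℕ) * (l.factorial) * ((k+3).factorial) := by
    rw [show k+l+4 = (k+l+3)+1 from rfl, Nat.factorial_succ, ← h1]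
    push_cast
    ring
  have keyl : ((l+3).factorial : ℚ) = ((l:ℚ)+3)*((l:ℚ)+2)*((l:ℚ)+1)*(l.factorial) := by
    rw [show l+3 = (l+2)+1 from rfl, Nat.factorial_succ, show l+2 = (l+1)+1 from rfl,
      Nat.factorial_succ, Nat.factorial_succ]
    push_cast
    ring
  have n1 : ((k:ℚ)+l+4) ≠ 0 := by positivity
  have n2 : ((k+3).factorial : ℚ) ≠ 0 := Nat.cast_ne_zero.2 (Nat.factorial_ne_zero _)
  have n3 : (l.factorial : ℚ) ≠ 0 := Nat.cast_ne_zero.2 (Nat.factorial_ne_zero _)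
  have n4 : ((k:ℚ)+3) ≠ 0 := by positivity
  have n5 : ((l:ℚ)+3) ≠ 0 := by positivity
  have n6 : ((l:ℚ)+1) ≠ 0 := by positivity
  have n7 : ((l:ℚ)+2) ≠ 0 := by positivity
  rw [pow_add, key, keyl]
  field_simp
  ring

-- B_n sum
lemma sumB (n : ℕ) : ∑ k ∈ range (n+1), (-1:ℚ)^k * n.choose k * (1/((k:ℚ)+3))
    = 2 / (((n:ℚ)+1)*((n:ℚ)+2)*((n:ℚ)+3)) := by
  have h := sumG 2 n 0
  have e1 : ∀ k ∈ range (n+1), (-1:ℚ)^k * n.choose k * (((k+2).factorial : ℚ) / ((k+2+1+0).factorial))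
      = (-1:ℚ)^k * n.choose k * (1/((k:ℚ)+3)) := by
    intro k _
    rw [show k+2+1+0 = (k+2)+1 from by omega, Nat.factorial_succ (k+2)]
    have : ((k+2).factorial : ℚ) ≠ 0 := Nat.cast_ne_zero.2 (Nat.factorial_ne_zero _)
    have : ((k:ℚ)+3) ≠ 0 := by positivity
    push_cast
    field_simp
    ring
  rw [Finset.sum_congr rfl e1] at h
  rw [h]
  have hf : ((n+2+1+0).factorial : ℚ) = ((n:ℚ)+3)*((n:ℚ)+2)*((n:ℚ)+1)*(n.factorial) := by
    rw [show n+2+1+0 = ((n+2)+1) from by omega, Nat.factorial_succ (n+2),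
      show n+2 = (n+1)+1 from rfl, Nat.factorial_succ (n+1), Nat.factorial_succ n]
    push_cast
    ring
  rw [hf, show (n+0) = n from rfl]
  have : (n.factorial : ℚ) ≠ 0 := Nat.cast_ne_zero.2 (Nat.factorial_ne_zero _)
  have h1 : ((n:ℚ)+1) ≠ 0 := by positivity
  have h2 : ((n:ℚ)+2) ≠ 0 := by positivity
  have h3 : ((n:ℚ)+3) ≠ 0 := by positivity
  norm_num [Nat.factorial]
  field_simp

theorem stmt11 (i j : ℕ) (hij : i ≠ j) :
    2 * ∑ k ∈ Finset.range (i + 1), ∑ l ∈ Finset.range (j + 1),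
      (-1 : ℚ) ^ (k + l) / (k + l + 4) * (i.choose k) * (j.choose l) *
        (2 * (Nat.factorial (k + l + 4)) /
            ((Nat.factorial (k + 3)) * (Nat.factorial (l + 3))) - 1 -
          ((k : ℚ) + 1) * (l + 1) / (((k : ℚ) + 3) * (l + 3))) =
      16 / (((i : ℚ) + 3) * (i + 2) * (i + 1) * ((j : ℚ) + 3) * (j + 2) * (j + 1)) -
        24 / (((i : ℚ) + j + 4) * (i + j + 3) * (i + j + 2) * (i + j + 1)) := by
  rw [Finset.sum_congr rfl fun k _ => Finset.sum_congr rfl fun l _ => term_eq i j k l]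
  simp only [Finset.sum_add_distrib, Finset.sum_sub_distrib]
  -- Q part
  have hQ : ∑ k ∈ range (i+1), ∑ l ∈ range (j+1),
      (-1:ℚ)^k * i.choose k * ((-1:ℚ)^l * j.choose l * (2 * ((1/((k:ℚ)+3)) * (1/((l:ℚ)+3)))))
      = 2 * ((2 / (((i:ℚ)+1)*((i:ℚ)+2)*((i:ℚ)+3))) * (2 / (((j:ℚ)+1)*((j:ℚ)+2)*((j:ℚ)+3)))) := by
    rw [← sumB i, ← sumB j, Finset.sum_mul_sum, Finset.mul_sum]
    refine Finset.sum_congr rfl fun k _ => ?_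
    rw [Finset.mul_sum]
    exact Finset.sum_congr rfl fun l _ => by ring
  -- T part
  have hTin : ∀ k : ℕ, ∑ l ∈ range (j+1),
      (-1:ℚ)^l * j.choose l * (2 * (1/((k:ℚ)+(l:ℚ)+4)))
      = 2 * (((k+3).factorial : ℚ) * ((j.factorial : ℚ) / ((j+k+4).factorial))) := by
    intro k
    have h := sumG (k+3) j 0
    have e1 : ∀ l ∈ range (j+1),
        (-1:ℚ)^l * j.choose l * (2 * (1/((k:ℚ)+(l:ℚ)+4)))
        = 2 * ((-1:ℚ)^l * j.choose l * (((l+(k+3)).factorial : ℚ) / ((l+(k+3)+1+0).factorial))) := by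
      intro l _
      rw [show l+(k+3)+1+0 = (l+(k+3))+1 from by omega, Nat.factorial_succ]
      have : ((l+(k+3)).factorial : ℚ) ≠ 0 := Nat.cast_ne_zero.2 (Nat.factorial_ne_zero _)
      have : ((k:ℚ)+(l:ℚ)+4) ≠ 0 := by positivity
      push_cast
      field_simp
      ring
    rw [Finset.sum_congr rfl e1, ← Finset.mul_sum, h,
      show j+(k+3)+1+0 = j+k+4 from by omega, Nat.add_zero, Nat.factorial_zero]
    push_cast
    ring
  have hT : ∑ k ∈ range (i+1), ∑ l ∈ range (j+1),
      (-1:ℚ)^k * i.choose k * ((-1:ℚ)^l * j.choose l * (2 * (1/((k:ℚ)+(l:ℚ)+4))))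
      = 12 / (((i:ℚ)+j+4)*((i:ℚ)+j+3)*((i:ℚ)+j+2)*((i:ℚ)+j+1)) := by
    have e1 : ∀ k ∈ range (i+1), ∑ l ∈ range (j+1),
        (-1:ℚ)^k * i.choose k * ((-1:ℚ)^l * j.choose l * (2 * (1/((k:ℚ)+(l:ℚ)+4))))
        = (2 * j.factorial) * ((-1:ℚ)^k * i.choose k * (((k+3).factorial : ℚ) / ((k+3+1+j).factorial))) := by
      intro k _
      rw [← Finset.mul_sum, hTin k, show k+3+1+j = j+k+4 from by omega]
      ring
    rw [Finset.sum_congr rfl e1, ← Finset.mul_sum, sumG 3 i j]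
    have hf : ((i+3+1+j).factorial : ℚ)
        = ((i:ℚ)+j+4)*((i:ℚ)+j+3)*((i:ℚ)+j+2)*((i:ℚ)+j+1)*((i+j).factorial) := by
      rw [show i+3+1+j = ((i+j+3)+1) from by omega, Nat.factorial_succ (i+j+3),
        show i+j+3 = ((i+j+2)+1) from rfl, Nat.factorial_succ (i+j+2),
        show i+j+2 = ((i+j+1)+1) from rfl, Nat.factorial_succ (i+j+1),
        show i+j+1 = ((i+j)+1) from rfl, Nat.factorial_succ (i+j)]
      push_cast
      ring
    rw [hf]
    norm_num [Nat.factorial]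
    have n1 : ((i+j).factorial : ℚ) ≠ 0 := Nat.cast_ne_zero.2 (Nat.factorial_ne_zero _)
    have n2 : (j.factorial : ℚ) ≠ 0 := Nat.cast_ne_zero.2 (Nat.factorial_ne_zero _)
    have h1 : ((i:ℚ)+j+1) ≠ 0 := by positivity
    have h2 : ((i:ℚ)+j+2) ≠ 0 := by positivity
    have h3 : ((i:ℚ)+j+3) ≠ 0 := by positivity
    have h4 : ((i:ℚ)+j+4) ≠ 0 := by positivity
    field_simp
    ring
  have hP : ∑ k ∈ range (i+1), ∑ l ∈ range (j+1),
      (-1:ℚ)^k * i.choose k * ((-1:ℚ)^l * j.choose l *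
        (2 * (((k+(l+3)).choose l : ℕ) : ℚ) / (((l:ℚ)+1)*((l:ℚ)+2)*((l:ℚ)+3))))
      = 0 := by
    rw [Finset.sum_comm]
    have e1 : ∀ l ∈ range (j+1), ∑ k ∈ range (i+1),
        (-1:ℚ)^k * i.choose k * ((-1:ℚ)^l * j.choose l *
          (2 * (((k+(l+3)).choose l : ℕ) : ℚ) / (((l:ℚ)+1)*((l:ℚ)+2)*((l:ℚ)+3))))
        = ((-1:ℚ)^i * (2 * i.factorial / (i+3).factorial)) *
            ((-1:ℚ)^l * j.choose l * (((l+0).choose i : ℕ) : ℚ)) := by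
      intro l _
      have e2 : ∀ k ∈ range (i+1),
          (-1:ℚ)^k * i.choose k * ((-1:ℚ)^l * j.choose l *
            (2 * (((k+(l+3)).choose l : ℕ) : ℚ) / (((l:ℚ)+1)*((l:ℚ)+2)*((l:ℚ)+3))))
          = ((-1:ℚ)^l * j.choose l * (2 / (((l:ℚ)+1)*((l:ℚ)+2)*((l:ℚ)+3)))) *
              ((-1:ℚ)^k * i.choose k * (((k+(l+3)).choose l : ℕ) : ℚ)) := by
        intro k _; ring
      rw [Finset.sum_congr rfl e2, ← Finset.mul_sum, sumD i (l+3) l]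
      by_cases hil : i ≤ l
      · rw [if_pos hil]
        have n1 : (l+3).choose (l-i) * (l-i).factorial * (i+3).factorial = (l+3).factorial := by
          have h := Nat.choose_mul_factorial_mul_factorial (show l-i ≤ l+3 by omega)
          rwa [show l+3-(l-i) = i+3 from by omega] at h
        have n2 : l.choose i * i.factorial * (l-i).factorial = l.factorial := by
          exact Nat.choose_mul_factorial_mul_factorial hil
        have n3 : ((l+3).factorial : ℚ) = ((l:ℚ)+3)*((l:ℚ)+2)*((l:ℚ)+1)*(l.factorial) := by
          rw [show l+3 = (l+2)+1 from rfl, Nat.factorial_succ, show l+2 = (l+1)+1 from rfl,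
            Nat.factorial_succ, Nat.factorial_succ]
          push_cast; ring
        have q1 : ((l+3).choose (l-i) : ℚ) * (l-i).factorial * (i+3).factorial
            = ((l:ℚ)+3)*((l:ℚ)+2)*((l:ℚ)+1)*(l.factorial) := by
          rw [← n3]; exact_mod_cast congrArg (Nat.cast (R := ℚ)) n1
        have q2 : (l.choose i : ℚ) * i.factorial * (l-i).factorial = (l.factorial : ℚ) := by
          exact_mod_cast congrArg (Nat.cast (R := ℚ)) n2
        have m1 : ((l-i).factorial : ℚ) ≠ 0 := Nat.cast_ne_zero.2 (Nat.factorial_ne_zero _)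
        have m2 : ((i+3).factorial : ℚ) ≠ 0 := Nat.cast_ne_zero.2 (Nat.factorial_ne_zero _)
        have m3 : (l.factorial : ℚ) ≠ 0 := Nat.cast_ne_zero.2 (Nat.factorial_ne_zero _)
        have m4 : ((l:ℚ)+1) ≠ 0 := by positivity
        have m5 : ((l:ℚ)+2) ≠ 0 := by positivity
        have m6 : ((l:ℚ)+3) ≠ 0 := by positivity
        have hc : ((l+3).choose (l-i) : ℚ)
            = ((l:ℚ)+3)*((l:ℚ)+2)*((l:ℚ)+1)*(l.factorial) / ((l-i).factorial * (i+3).factorial) := by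
          field_simp
          linear_combination q1
        have hc2 : ((l.choose i : ℕ) : ℚ) = (l.factorial : ℚ) / (i.factorial * (l-i).factorial) := by
          have m7 : (i.factorial : ℚ) ≠ 0 := Nat.cast_ne_zero.2 (Nat.factorial_ne_zero _)
          field_simp
          linear_combination q2
        rw [hc, show l+0 = l from rfl, hc2]
        have m7 : (i.factorial : ℚ) ≠ 0 := Nat.cast_ne_zero.2 (Nat.factorial_ne_zero _)
        field_simp
      · rw [if_neg hil, show l+0 = l from rfl,
          Nat.choose_eq_zero_of_lt (by omega : l < i)]
        simp
    rw [Finset.sum_congr rfl e1, ← Finset.mul_sum, sumD j 0 i]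
    by_cases hji : j ≤ i
    · rw [if_pos hji, Nat.choose_eq_zero_of_lt (show 0 < i - j by omega)]
      simp
    · rw [if_neg hji]
      simp
  rw [hP, hT, hQ]
  have h1 : ((i:ℚ)+1) ≠ 0 := by positivity
  have h2 : ((i:ℚ)+2) ≠ 0 := by positivity
  have h3 : ((i:ℚ)+3) ≠ 0 := by positivity
  have h4 : ((j:ℚ)+1) ≠ 0 := by positivity
  have h5 : ((j:ℚ)+2) ≠ 0 := by positivity
  have h6 : ((j:ℚ)+3) ≠ 0 := by positivity
  have h7 : ((i:ℚ)+j+1) ≠ 0 := by positivity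
  have h8 : ((i:ℚ)+j+2) ≠ 0 := by positivity
  have h9 : ((i:ℚ)+j+3) ≠ 0 := by positivity
  have h10 : ((i:ℚ)+j+4) ≠ 0 := by positivity
  field_simp
  ring
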